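/- Let t > 0 and let m be a positive integer. Then the rescaled even central moments of the Gamma distribution with shape n and rate n/t converge to the corresponding Gaussian moment: lim_{n→∞} n^m ∫ (x − t)^{2m} dΓ(n, n/t)(x) = ((2m)! / (2^m m!)) · t^{2m}. -/

import Mathlib

open MeasureTheory ProbabilityTheory Filter Finset

/-!
Expanding `(x - a / r) ^ k` binomially and using the moments
`∫ x ^ j dΓ(a, r) = a (a + 1) ⋯ (a + j - 1) / r ^ j`, the `k`-th central moment of `Γ(a, r)` is
`D k a / r ^ k` for a polynomial `D k`. Pascal's rule and `j C(k + 1, j) = (k + 1) C(k, j - 1)`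
give the recursion `D (k + 2) = (k + 1) (D (k + 1) + a D k)` with `D 0 = 1`, `D 1 = 0`, so by
induction `D (2m) a ~ (2m)! / (2^m m!) a ^ m` and `D (2m + 1) a = o(a ^ (m + 1))` as `a → ∞`.
For `Γ(n, n / t)` the mean is `t`, and
`n ^ m D (2m) n / (n / t) ^ (2m) = t ^ (2m) D (2m) n / n ^ m`.
-/

section BinomialTransform

variable {R : Type*} [CommSemiring R]

/-- `binomialTransform c u k = ((S + c) ^ k u) 0`, where `S` is the shift `S u j = u (j + 1)`. -/
def binomialTransform (c : R) (u : ℕ → R) (k : ℕ) : R :=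
  ∑ j ∈ range (k + 1), (k.choose j : R) * c ^ (k - j) * u j

theorem binomialTransform_succ (c : R) (u : ℕ → R) (k : ℕ) :
    binomialTransform c u (k + 1) =
      c * binomialTransform c u k + binomialTransform c (fun j => u (j + 1)) k := by
  have h := sum_choose_succ_mul (fun i l => c ^ l * u i) k
  simp only [← mul_assoc] at h
  rw [binomialTransform, h, binomialTransform, binomialTransform, mul_sum]
  congr 1
  refine sum_congr rfl fun j hj => ?_
  rw [show k + 1 - j = k - j + 1 by grind, pow_succ]
  ring

theorem binomialTransform_succ_natCast_mul (c : R) (u : ℕ → R) (k : ℕ) :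
    binomialTransform c (fun j => j * u j) (k + 1) =
      (k + 1) * binomialTransform c (fun j => u (j + 1)) k := by
  rw [binomialTransform, sum_range_succ', binomialTransform, mul_sum]
  simp only [Nat.cast_zero, zero_mul, mul_zero, add_zero, Nat.add_sub_add_right]
  refine sum_congr rfl fun j _ => ?_
  have h : ((k + 1).choose (j + 1) * (j + 1) : R) = (k + 1) * k.choose j := by
    simpa using congrArg (Nat.cast : ℕ → R) (Nat.add_one_mul_choose_eq k j).symm
  calc ((k + 1).choose (j + 1) : R) * c ^ (k - j) * ((j + 1 : ℕ) * u (j + 1))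
      = ((k + 1).choose (j + 1) * (j + 1) : R) * (c ^ (k - j) * u (j + 1)) := by push_cast; ring
    _ = (k + 1) * (k.choose j * c ^ (k - j) * u (j + 1)) := by rw [h]; ring

theorem binomialTransform_add (c : R) (u v : ℕ → R) (k : ℕ) :
    binomialTransform c (u + v) k = binomialTransform c u k + binomialTransform c v k := by
  simp only [binomialTransform, Pi.add_apply, mul_add, sum_add_distrib]

theorem binomialTransform_const_mul (c a : R) (u : ℕ → R) (k : ℕ) :
    binomialTransform c (fun j => a * u j) k = a * binomialTransform c u k := by
  simp only [binomialTransform, mul_sum]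
  exact sum_congr rfl fun j _ => by ring

end BinomialTransform

theorem Real.Gamma_add_nat_eq_mul_ascPochhammer {a : ℝ} (ha : ∀ k : ℕ, a + k ≠ 0)
    (n : ℕ) :
    Real.Gamma (a + n) = Real.Gamma a * (ascPochhammer ℝ n).eval a := by
  induction n with
  | zero => simp
  | succ n ih =>
    rw [Nat.cast_succ, ← add_assoc, Real.Gamma_add_one (ha n), ih, ascPochhammer_succ_eval]
    ring

namespace ProbabilityTheory

/-- The `k`-th central moment of `Γ(a, 1)`; that of `Γ(a, r)` is
`gammaCentralMoment k a / r ^ k`. -/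
noncomputable def gammaCentralMoment (k : ℕ) (a : ℝ) : ℝ :=
  binomialTransform (-a) (fun j => (ascPochhammer ℝ j).eval a) k

theorem gammaCentralMoment_zero (a : ℝ) : gammaCentralMoment 0 a = 1 := by
  simp [gammaCentralMoment, binomialTransform]

theorem gammaCentralMoment_one (a : ℝ) : gammaCentralMoment 1 a = 0 := by
  simp [gammaCentralMoment, binomialTransform, sum_range_succ]

theorem gammaCentralMoment_add_two (k : ℕ) (a : ℝ) :
    gammaCentralMoment (k + 2) a =
      (k + 1) * (gammaCentralMoment (k + 1) a + a * gammaCentralMoment k a) := by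
  set u : ℕ → ℝ := fun j => (ascPochhammer ℝ j).eval a
  -- The shift acts on rising factorials as multiplication by `a + j`.
  have hshift (k : ℕ) : binomialTransform (-a) (fun j => u (j + 1)) k =
      a * gammaCentralMoment k a + binomialTransform (-a) (fun j => j * u j) k := by
    have hu : (fun j => u (j + 1)) = (fun j => a * u j) + fun j => j * u j := by
      ext j; simp only [u, ascPochhammer_succ_eval, Pi.add_apply]; ring
    rw [hu, binomialTransform_add, binomialTransform_const_mul]; rfl
  have hsucc (k : ℕ) :
      gammaCentralMoment (k + 1) a = binomialTransform (-a) (fun j => j * u j) k := by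
    rw [gammaCentralMoment, binomialTransform_succ, hshift, gammaCentralMoment]; ring
  rw [hsucc, binomialTransform_succ_natCast_mul, hshift, hsucc]
  ring

section GammaMoments

variable {a r : ℝ} (ha : 0 < a) (hr : 0 < r)
include ha hr

theorem integral_gammaMeasure (g : ℝ → ℝ) :
    ∫ x, g x ∂gammaMeasure a r = ∫ x, gammaPDFReal a r x * g x := by
  rw [gammaMeasure, integral_withDensity_eq_integral_toReal_smul (f := gammaPDF a r)
    (measurable_gammaPDFReal a r).ennreal_ofReal (ae_of_all _ fun _ => ENNReal.ofReal_lt_top)]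
  simp only [gammaPDF, ENNReal.toReal_ofReal (gammaPDFReal_nonneg ha hr _), smul_eq_mul]

theorem integrable_gammaMeasure_iff (g : ℝ → ℝ) :
    Integrable g (gammaMeasure a r) ↔ Integrable (fun x => gammaPDFReal a r x * g x) := by
  rw [gammaMeasure, integrable_withDensity_iff_integrable_smul' (f := gammaPDF a r)
    (measurable_gammaPDFReal a r).ennreal_ofReal (ae_of_all _ fun _ => ENNReal.ofReal_lt_top)]
  simp only [gammaPDF, ENNReal.toReal_ofReal (gammaPDFReal_nonneg ha hr _), smul_eq_mul]

theorem integral_gammaPDFReal : ∫ x, gammaPDFReal a r x = 1 := by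
  have := isProbabilityMeasure_gammaMeasure ha hr
  simpa using (integral_gammaMeasure ha hr fun _ => 1).symm

theorem gammaPDFReal_mul_pow_ae_eq (k : ℕ) :
    (fun x => gammaPDFReal a r x * x ^ k) =ᵐ[volume]
      fun x => (ascPochhammer ℝ k).eval a / r ^ k * gammaPDFReal (a + k) r x := by
  filter_upwards [Measure.ae_ne volume 0] with x hx
  rcases lt_or_gt_of_ne hx with hneg | hpos
  · simp [gammaPDFReal, not_le.2 hneg]
  have hΓ := Real.Gamma_add_nat_eq_mul_ascPochhammer
    (fun j => by positivity : ∀ j : ℕ, a + j ≠ 0) k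
  have hasc := (ascPochhammer_pos k a ha).ne'
  simp only [gammaPDFReal, if_pos hpos.le, Real.rpow_add_natCast hr.ne',
    show a + k - 1 = a - 1 + k by ring, Real.rpow_add_natCast hx, hΓ]
  field_simp

theorem integrable_pow_gammaMeasure (k : ℕ) : Integrable (fun x => x ^ k) (gammaMeasure a r) := by
  rw [integrable_gammaMeasure_iff ha hr, integrable_congr (gammaPDFReal_mul_pow_ae_eq ha hr k)]
  refine (Integrable.of_integral_ne_zero ?_).const_mul _
  rw [integral_gammaPDFReal (by positivity) hr]
  exact one_ne_zero

theorem integral_pow_gammaMeasure (k : ℕ) :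
    ∫ x, x ^ k ∂gammaMeasure a r = (ascPochhammer ℝ k).eval a / r ^ k := by
  rw [integral_gammaMeasure ha hr, integral_congr_ae (gammaPDFReal_mul_pow_ae_eq ha hr k),
    integral_const_mul, integral_gammaPDFReal (by positivity) hr, mul_one]

end GammaMoments

theorem integral_sub_pow_gammaMeasure {a r : ℝ} (ha : 0 < a) (hr : 0 < r) (k : ℕ) :
    ∫ x, (x - a / r) ^ k ∂gammaMeasure a r = gammaCentralMoment k a / r ^ k := by
  simp_rw [sub_eq_add_neg, add_pow]
  rw [integral_finsetSum _ fun j _ =>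
    ((integrable_pow_gammaMeasure ha hr j).mul_const _).mul_const _]
  simp only [integral_mul_const, integral_pow_gammaMeasure ha hr, gammaCentralMoment,
    binomialTransform, sum_div]
  refine sum_congr rfl fun j hj => ?_
  obtain ⟨i, rfl⟩ := Nat.exists_eq_add_of_le (Nat.lt_succ_iff.1 (mem_range.1 hj))
  rw [Nat.add_sub_cancel_left, ← neg_div, div_pow, pow_add]
  field_simp

theorem tendsto_gammaCentralMoment_div_pow (m : ℕ) :
    Tendsto (fun a => gammaCentralMoment (2 * m) a / a ^ m) atTop
        (nhds ((2 * m).factorial / (2 ^ m * m.factorial) : ℝ)) ∧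
      Tendsto (fun a => gammaCentralMoment (2 * m + 1) a / a ^ (m + 1)) atTop (nhds 0) := by
  induction m with
  | zero => simp [gammaCentralMoment_zero, gammaCentralMoment_one]
  | succ m ih =>
    obtain ⟨heven, hodd⟩ := ih
    have hconst : ((2 * (m + 1)).factorial / (2 ^ (m + 1) * (m + 1).factorial) : ℝ) =
        (2 * m + 1) * ((2 * m).factorial / (2 ^ m * m.factorial)) := by
      rw [show 2 * (m + 1) = 2 * m + 1 + 1 by ring]
      push_cast [Nat.factorial_succ]
      field_simp
      ring
    have heven_succ : Tendsto (fun a => gammaCentralMoment (2 * (m + 1)) a / a ^ (m + 1)) atTop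
        (nhds ((2 * (m + 1)).factorial / (2 ^ (m + 1) * (m + 1).factorial) : ℝ)) := by
      have h := (hodd.add heven).const_mul (2 * m + 1 : ℝ)
      rw [zero_add, ← hconst] at h
      refine h.congr' ?_
      filter_upwards [eventually_ne_atTop 0] with a ha
      rw [show 2 * (m + 1) = 2 * m + 2 by ring, gammaCentralMoment_add_two]
      field_simp
      push_cast
      ring
    refine ⟨heven_succ, ?_⟩
    have h := ((heven_succ.mul tendsto_inv_atTop_zero).add hodd).const_mul (2 * m + 2 : ℝ)
    rw [mul_zero, zero_add, mul_zero] at h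
    refine h.congr' ?_
    filter_upwards [eventually_ne_atTop 0] with a ha
    rw [show 2 * (m + 1) + 1 = 2 * m + 1 + 2 by ring, gammaCentralMoment_add_two,
      show 2 * m + 1 + 1 = 2 * (m + 1) by ring]
    field_simp
    push_cast
    ring

end ProbabilityTheory

theorem gamma_central_moment_gaussian_limit_general (t : ℝ) (ht : 0 < t) (m : ℕ) :
    Tendsto (fun n : ℕ =>
        (n : ℝ) ^ m * ∫ x, (x - t) ^ (2 * m) ∂(gammaMeasure n ((n : ℝ) / t)))
      atTop
      (nhds (((2 * m).factorial / (2 ^ m * m.factorial) : ℝ) * t ^ (2 * m))) := by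
  have hlim := ((tendsto_gammaCentralMoment_div_pow m).1.comp
    tendsto_natCast_atTop_atTop).mul_const (t ^ (2 * m))
  refine hlim.congr' ?_
  filter_upwards [eventually_gt_atTop 0] with n hn_pos
  have hn : (0 : ℝ) < n := Nat.cast_pos.2 hn_pos
  have hmoment := integral_sub_pow_gammaMeasure hn (div_pos hn ht) (2 * m)
  rw [div_div_cancel₀ hn.ne'] at hmoment
  rw [Function.comp_apply, hmoment, div_pow, pow_mul]
  field_simp
  ring

/-- For `t > 0` and a positive integer `m`, the rescaled even central moments of the Gamma
distribution with shape `n` and rate `n / t` converge to the corresponding Gaussian moment: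
`n^m ∫ (x - t)^{2m} dΓ(n, n/t)(x) → ((2m)! / (2^m m!)) t^{2m}` as `n → ∞`. -/
theorem gamma_central_moment_gaussian_limit (t : ℝ) (ht : 0 < t) (m : ℕ) (hm : 0 < m) :
    Tendsto (fun n : ℕ =>
        (n : ℝ) ^ m * ∫ x, (x - t) ^ (2 * m) ∂(gammaMeasure n ((n : ℝ) / t)))
      atTop
      (nhds (((2 * m).factorial / (2 ^ m * m.factorial) : ℝ) * t ^ (2 * m))) :=
  gamma_central_moment_gaussian_limit_general t ht m
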